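/- If there exist coprime positive integers p ≠ q and a positive integer t satisfying Q_{p,q}(t) = 0 together with the inequalities t > p², t > pq, t > q², and (p² + t)(pq + t) > 2t², then a perfect cuboid exists. -/
import Mathlib


/-- The tenth-degree polynomial `Q_{p,q}(t)` from the second cuboid conjecture,
defined for elements of any commutative ring. -/
def Q {R : Type*} [CommRing R] (p q t : R) : R :=
  t ^ 10 + (2 * q ^ 2 + p ^ 2) * (3 * q ^ 2 - 2 * p ^ 2) * t ^ 8
    + (q ^ 8 + 10 * p ^ 2 * q ^ 6 + 4 * p ^ 4 * q ^ 4 - 14 * p ^ 6 * q ^ 2 + p ^ 8) * t ^ 6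
    - p ^ 2 * q ^ 2 * (q ^ 8 - 14 * p ^ 2 * q ^ 6 + 4 * p ^ 4 * q ^ 4
        + 10 * p ^ 6 * q ^ 2 + p ^ 8) * t ^ 4
    - p ^ 6 * q ^ 6 * (q ^ 2 + 2 * p ^ 2) * (3 * p ^ 2 - 2 * q ^ 2) * t ^ 2
    - p ^ 10 * q ^ 10

/-- A perfect cuboid: positive integers `a, b, c` (the edges) such that all three
face diagonals and the space diagonal have integer lengths. -/
def IsPerfectCuboid (a b c : ℤ) : Prop :=
  0 < a ∧ 0 < b ∧ 0 < c ∧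
  (∃ d : ℤ, a ^ 2 + b ^ 2 = d ^ 2) ∧
  (∃ e : ℤ, b ^ 2 + c ^ 2 = e ^ 2) ∧
  (∃ f : ℤ, a ^ 2 + c ^ 2 = f ^ 2) ∧
  (∃ g : ℤ, a ^ 2 + b ^ 2 + c ^ 2 = g ^ 2)

theorem stmt_0
    (h : ∃ p q t : ℤ, 0 < p ∧ 0 < q ∧ p ≠ q ∧ IsCoprime p q ∧ 0 < t ∧
      Q p q t = 0 ∧ p ^ 2 < t ∧ p * q < t ∧ q ^ 2 < t ∧
      2 * t ^ 2 < (p ^ 2 + t) * (p * q + t)) :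
    ∃ a b c : ℤ, IsPerfectCuboid a b c := by
  obtain ⟨p, q, t, hp, hq, -, -, ht, hQ, hp2, hpq, hq2, -⟩ := h
  unfold Q at hQ
  -- positivity facts
  have h1 : (0:ℤ) < t ^ 2 - p ^ 2 * q ^ 2 := by nlinarith
  have h2 : (0:ℤ) < t ^ 2 - p ^ 4 := by nlinarith
  have h3 : (0:ℤ) < t ^ 2 + p ^ 2 * q ^ 2 := by positivity
  have h4 : (0:ℤ) < t ^ 2 + p ^ 4 := by positivity
  have h5 : (0:ℤ) < t ^ 2 + q ^ 4 := by positivity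
  refine ⟨(t ^ 2 - p ^ 2 * q ^ 2) * (t ^ 2 + p ^ 4) * (t ^ 2 + q ^ 4),
          (t ^ 2 + p ^ 2 * q ^ 2) * (t ^ 2 - p ^ 4) * (t ^ 2 + q ^ 4),
          2 * q ^ 2 * t * (t ^ 2 + p ^ 2 * q ^ 2) * (t ^ 2 + p ^ 4),
          mul_pos (mul_pos h1 h4) h5,
          mul_pos (mul_pos h3 h2) h5,
          ?_, ?_, ?_, ?_, ?_⟩
  · have : (0:ℤ) < 2 * q ^ 2 * t := by positivity
    exact mul_pos (mul_pos this h3) h4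
  · exact ⟨(t ^ 2 - q ^ 4) * (t ^ 2 + p ^ 2 * q ^ 2) * (t ^ 2 + p ^ 4), by
      linear_combination (t ^ 2 - p ^ 2 * q ^ 2) * hQ⟩
  · exact ⟨2 * p * q * t * (t ^ 2 + p ^ 4) * (t ^ 2 + q ^ 4), by
      linear_combination (t ^ 2 - p ^ 2 * q ^ 2) * hQ⟩
  · exact ⟨2 * p ^ 2 * t * (t ^ 2 + p ^ 2 * q ^ 2) * (t ^ 2 + q ^ 4), by
      linear_combination (t ^ 2 - p ^ 2 * q ^ 2) * hQ⟩
  · exact ⟨(t ^ 2 + p ^ 2 * q ^ 2) * (t ^ 2 + p ^ 4) * (t ^ 2 + q ^ 4), by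
      linear_combination (t ^ 2 - p ^ 2 * q ^ 2) * hQ⟩
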